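/- arXiv:1104.2289 — 4 statements merged into one kernel-verified Lean document; each statement's English description precedes it below -/
import Mathlib

section
/- An S₁×⋯×S_N-setting correlation scenario admits an LqHV (local quasi hidden variable) model if and only if there exists a finite signed measure μ on the product measurable space Λ₁^{S₁}×⋯×Λ_N^{S_N}, with total mass μ(Λ₁^{S₁}×⋯×Λ_N^{S_N}) = 1, that returns all joint probability distributions P_{(s₁,…,s_N)} of the scenario as the corresponding marginals. -/
open MeasureTheory ProbabilityTheory

namespace LqHV

/-- Integration of a function with respect to a signed measure, via the Jordan
decomposition. -/
noncomputable def signedIntegral {Ω : Type} [MeasurableSpace Ω] (ν : SignedMeasure Ω)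
    (f : Ω → ℝ) : ℝ :=
  (∫ ω, f ω ∂ν.toJordanDecomposition.posPart) - ∫ ω, f ω ∂ν.toJordanDecomposition.negPart

/-- An `S₁ × ⋯ × S_N`-setting correlation scenario, given by its family of joint probability
distributions `P`, admits an LqHV (local quasi hidden variable) model: there are a measurable
space `Ω`, a finite signed measure `ν` on `Ω` with `ν(Ω) = 1`, and Markov kernels
`κ n s : Ω → Λ n` such that every joint distribution factorizes on measurable rectangles as
`P s (F₁ × ⋯ × F_N) = ∫ ∏ n, κ n (s n) ω (F n) dν(ω)`. -/
def AdmitsLqHV {N : ℕ} {S : Fin N → ℕ} {Λ : Fin N → Type} [∀ n, MeasurableSpace (Λ n)]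
    (P : (∀ n, Fin (S n)) → Measure (∀ n, Λ n)) : Prop :=
  ∃ (Ω : Type) (_ : MeasurableSpace Ω) (ν : SignedMeasure Ω)
    (κ : ∀ n, Fin (S n) → Kernel Ω (Λ n)),
    ν Set.univ = 1 ∧ (∀ n s, IsMarkovKernel (κ n s)) ∧
    ∀ (s : ∀ n, Fin (S n)) (F : ∀ n, Set (Λ n)), (∀ n, MeasurableSet (F n)) →
      (P s (Set.univ.pi F)).toReal =
        signedIntegral ν fun ω => ∏ n, (κ n (s n) ω (F n)).toReal

end LqHV

/-!
A signed measure `μ` with the prescribed marginals is itself an LqHV model: take `Ω` to be the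
product space `Λ₁^{S₁} × ⋯ × Λ_N^{S_N}`, `ν = μ`, and as `κ n t` the deterministic kernel reading
off the coordinate `(n, t)`. Conversely, given an LqHV model `(ν, κ)`, let `Q ω` be the product
measure drawing, independently for every party `n` and setting `t`, an outcome from `κ n t ω`,
and push `ν` forward along `Q`. The marginal of the resulting signed measure at `s` is `ν`
pushed along `ω ↦ ⊗ₙ κ n (s n) ω`, which gives the rectangle `F₁ × ⋯ × F_N` the mass
`∫ ∏ₙ κ n (s n) ω (Fₙ) dν = P_s(F₁ × ⋯ × F_N)`; rectangles determine a signed measure.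
-/

open Set

namespace MeasureTheory.Measure

theorem pi_dirac {ι : Type*} [Fintype ι] {α : ι → Type*} [∀ i, MeasurableSpace (α i)]
    (x : ∀ i, α i) : Measure.pi (fun i => dirac (x i)) = dirac x := by
  classical
  refine pi_eq fun F hF => ?_
  simp only [dirac_apply' _ (MeasurableSet.univ_pi hF), dirac_apply' _ (hF _)]
  by_cases hx : x ∈ univ.pi F
  · rw [indicator_of_mem hx, Finset.prod_eq_one fun i _ => indicator_of_mem (hx i trivial) _]
    rfl
  · obtain ⟨i, hi⟩ : ∃ i, x i ∉ F i := by simpa [mem_univ_pi] using hx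
    rw [indicator_of_notMem hx, Finset.prod_eq_zero (Finset.mem_univ i) (indicator_of_notMem hi _)]

end MeasureTheory.Measure

namespace ProbabilityTheory.Kernel

variable {ι : Type*} [Fintype ι] {Ω : Type*} [MeasurableSpace Ω]
  {α β : ι → Type*} [∀ i, MeasurableSpace (α i)] [∀ i, MeasurableSpace (β i)]

theorem measurable_measure_pi (κ : ∀ i, Kernel Ω (α i)) [∀ i, IsFiniteKernel (κ i)] :
    Measurable fun ω => Measure.pi fun i => κ i ω := by
  refine Measure.measurable_of_measurable_coe _ fun A hA => ?_
  induction A, hA using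
    MeasurableSpace.induction_on_inter (generateFrom_pi (α := α)).symm isPiSystem_pi with
  | empty => simp
  | basic t ht =>
    obtain ⟨F, hF, rfl⟩ := ht
    simp only [Measure.pi_pi]
    exact Finset.measurable_prod _ fun i _ => Kernel.measurable_coe _ (hF i trivial)
  | compl t ht iht =>
    have hcompl : ∀ ω, Measure.pi (fun i => κ i ω) tᶜ =
        ∏ i, κ i ω univ - Measure.pi (fun i => κ i ω) t := fun ω => by
      rw [measure_compl ht (measure_ne_top _ _), ← pi_univ, Measure.pi_pi]
    simp only [hcompl]
    exact (Finset.measurable_prod _ fun i _ => Kernel.measurable_coe _ .univ).sub iht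
  | iUnion f hd hf ihf =>
    simp only [measure_iUnion hd hf]
    exact Measurable.tsum ihf

noncomputable def pi (κ : ∀ i, Kernel Ω (α i)) [∀ i, IsFiniteKernel (κ i)] :
    Kernel Ω (∀ i, α i) :=
  ⟨fun ω => Measure.pi fun i => κ i ω, measurable_measure_pi κ⟩

theorem pi_apply (κ : ∀ i, Kernel Ω (α i)) [∀ i, IsFiniteKernel (κ i)] (ω : Ω) :
    pi κ ω = Measure.pi fun i => κ i ω := rfl

instance (κ : ∀ i, Kernel Ω (α i)) [∀ i, IsFiniteKernel (κ i)] : IsFiniteKernel (pi κ) :=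
  ⟨⟨∏ i, (κ i).bound, ENNReal.prod_lt_top fun i _ => (κ i).bound_lt_top, fun ω => by
    rw [pi_apply, ← pi_univ, Measure.pi_pi]
    exact Finset.prod_le_prod' fun i _ => (κ i).measure_le_bound ω univ⟩⟩

instance (κ : ∀ i, Kernel Ω (α i)) [∀ i, IsMarkovKernel (κ i)] : IsMarkovKernel (pi κ) :=
  ⟨fun ω => by rw [pi_apply]; infer_instance⟩

theorem map_pi (κ : ∀ i, Kernel Ω (α i)) [∀ i, IsFiniteKernel (κ i)]
    {f : ∀ i, α i → β i} (hf : ∀ i, Measurable (f i)) :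
    (pi κ).map (fun x i => f i (x i)) = pi fun i => (κ i).map (f i) := by
  ext1 ω
  have hmap : Measurable fun (x : ∀ i, α i) i => f i (x i) :=
    measurable_pi_lambda _ fun i => (hf i).comp (measurable_pi_apply i)
  rw [map_apply _ hmap, pi_apply, pi_apply, Measure.pi_map_pi fun i => (hf i).aemeasurable]
  simp only [map_apply _ (hf _)]

theorem pi_map_eval (κ : ∀ i, Kernel Ω (α i)) [∀ i, IsMarkovKernel (κ i)] (i : ι) :
    (pi κ).map (Function.eval i) = κ i := by
  ext1 ω
  rw [map_apply _ (measurable_pi_apply i), pi_apply, (measurePreserving_eval _ i).map_eq]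

theorem map_pi_pi_eval {J : ι → Type*} [∀ i, Fintype (J i)] (κ : ∀ i, J i → Kernel Ω (α i))
    [∀ i j, IsMarkovKernel (κ i j)] (j : ∀ i, J i) :
    (pi fun i => pi (κ i)).map (fun x i => x i (j i)) = pi fun i => κ i (j i) := by
  simp only [map_pi _ (f := fun i => Function.eval (j i)) fun i => measurable_pi_apply (j i),
    pi_map_eval]

theorem pi_deterministic {f : ∀ i, Ω → α i} (hf : ∀ i, Measurable (f i)) :
    pi (fun i => deterministic (f i) (hf i)) =
      deterministic (fun ω i => f i ω) (measurable_pi_lambda _ hf) := by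
  ext1 ω
  simp only [pi_apply, deterministic_apply, Measure.pi_dirac]

end ProbabilityTheory.Kernel

namespace MeasureTheory.SignedMeasure

section Bind

variable {Ω α β : Type*} [MeasurableSpace Ω] [MeasurableSpace α] [MeasurableSpace β]

theorem apply_eq_posPart_sub_negPart (ν : SignedMeasure Ω) {A : Set Ω} (hA : MeasurableSet A) :
    ν A = ν.toJordanDecomposition.posPart.real A - ν.toJordanDecomposition.negPart.real A := by
  conv_lhs => rw [← ν.toSignedMeasure_toJordanDecomposition]
  rw [JordanDecomposition.toSignedMeasure, sub_apply,
    Measure.toSignedMeasure_apply_measurable hA, Measure.toSignedMeasure_apply_measurable hA]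

noncomputable def bind (ν : SignedMeasure Ω) (κ : Kernel Ω α) [IsFiniteKernel κ] :
    SignedMeasure α :=
  (κ ∘ₘ ν.toJordanDecomposition.posPart).toSignedMeasure -
    (κ ∘ₘ ν.toJordanDecomposition.negPart).toSignedMeasure

variable (ν : SignedMeasure Ω) (κ : Kernel Ω α) [IsFiniteKernel κ]

theorem bind_apply_eq_real_sub_real {A : Set α} (hA : MeasurableSet A) :
    ν.bind κ A = (κ ∘ₘ ν.toJordanDecomposition.posPart).real A -
      (κ ∘ₘ ν.toJordanDecomposition.negPart).real A := by
  rw [bind, sub_apply, Measure.toSignedMeasure_apply_measurable hA,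
    Measure.toSignedMeasure_apply_measurable hA]

theorem bind_univ [IsMarkovKernel κ] : ν.bind κ univ = ν univ := by
  simp only [bind_apply_eq_real_sub_real _ _ .univ, measureReal_def, Measure.comp_apply_univ,
    apply_eq_posPart_sub_negPart ν .univ]

theorem map_bind {f : α → β} (hf : Measurable f) : (ν.bind κ).map f = ν.bind (κ.map f) := by
  ext A hA
  rw [VectorMeasure.map_apply _ hf hA, bind_apply_eq_real_sub_real _ _ (hf hA),
    bind_apply_eq_real_sub_real _ _ hA, ← Measure.map_comp _ _ hf, ← Measure.map_comp _ _ hf,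
    map_measureReal_apply hf hA, map_measureReal_apply hf hA]

theorem bind_deterministic {f : Ω → α} (hf : Measurable f) :
    ν.bind (Kernel.deterministic f hf) = ν.map f := by
  ext A hA
  rw [bind_apply_eq_real_sub_real _ _ hA, Measure.deterministic_comp_eq_map,
    Measure.deterministic_comp_eq_map, map_measureReal_apply hf hA, map_measureReal_apply hf hA,
    VectorMeasure.map_apply _ hf hA, apply_eq_posPart_sub_negPart ν (hf hA)]

theorem ext_of_univ_pi {ι : Type*} [Finite ι] {α : ι → Type*} [∀ i, MeasurableSpace (α i)]
    {μ μ' : SignedMeasure (∀ i, α i)}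
    (h : ∀ F : ∀ i, Set (α i), (∀ i, MeasurableSet (F i)) → μ (univ.pi F) = μ' (univ.pi F)) :
    μ = μ' := by
  refine VectorMeasure.ext_of_generateFrom _ ?_ generateFrom_pi.symm isPiSystem_pi
    (by simpa only [pi_univ] using h (fun _ => univ) fun _ => .univ)
  rintro _ ⟨F, hF, rfl⟩
  exact h F fun i => hF i trivial

end Bind

variable {Ω : Type} [MeasurableSpace Ω] (ν : SignedMeasure Ω)

theorem bind_apply {α : Type*} [MeasurableSpace α] (κ : Kernel Ω α) [IsFiniteKernel κ]
    {A : Set α} (hA : MeasurableSet A) :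
    ν.bind κ A = LqHV.signedIntegral ν fun ω => (κ ω A).toReal := by
  have comp_real : ∀ (ρ : Measure Ω) [IsFiniteMeasure ρ],
      (κ ∘ₘ ρ).real A = ∫ ω, (κ ω A).toReal ∂ρ := fun ρ _ => by
    rw [measureReal_def, Measure.bind_apply hA κ.aemeasurable,
      integral_toReal (κ.measurable_coe hA).aemeasurable (ae_of_all _ fun _ => measure_lt_top _ _)]
  rw [bind_apply_eq_real_sub_real _ _ hA, comp_real, comp_real, LqHV.signedIntegral]

theorem bind_pi_apply_univ_pi {ι : Type*} [Fintype ι] {α : ι → Type*}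
    [∀ i, MeasurableSpace (α i)] (κ : ∀ i, Kernel Ω (α i)) [∀ i, IsFiniteKernel (κ i)]
    {F : ∀ i, Set (α i)} (hF : ∀ i, MeasurableSet (F i)) :
    ν.bind (Kernel.pi κ) (univ.pi F) =
      LqHV.signedIntegral ν fun ω => ∏ i, (κ i ω (F i)).toReal := by
  simp only [bind_apply _ _ (MeasurableSet.univ_pi hF), Kernel.pi_apply, Measure.pi_pi,
    ENNReal.toReal_prod]

end MeasureTheory.SignedMeasure

open LqHV in
theorem lqhv_model_iff_normalized_signed_measure_general
    {N : ℕ} {S : Fin N → ℕ}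
    {Λ : Fin N → Type} [∀ n, MeasurableSpace (Λ n)]
    (P : (∀ n, Fin (S n)) → Measure (∀ n, Λ n)) [∀ s, IsProbabilityMeasure (P s)] :
    AdmitsLqHV P ↔
      ∃ μ : SignedMeasure (∀ n, Fin (S n) → Λ n),
        μ Set.univ = 1 ∧
        ∀ s : ∀ n, Fin (S n),
          μ.map (fun ω n => ω n (s n)) = (P s).toSignedMeasure := by
  have hP : ∀ s F, (∀ n, MeasurableSet (F n)) →
      (P s).toSignedMeasure (univ.pi F) = (P s (univ.pi F)).toReal := fun s F hF =>
    Measure.toSignedMeasure_apply_measurable (.univ_pi hF)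
  constructor
  · rintro ⟨Ω, _, ν, κ, hν, hκ, hfactor⟩
    refine ⟨ν.bind (Kernel.pi fun n => Kernel.pi (κ n)), by rw [SignedMeasure.bind_univ, hν],
      fun s => ?_⟩
    have hf : Measurable fun (ω : ∀ n, Fin (S n) → Λ n) n => ω n (s n) := by fun_prop
    simp only [SignedMeasure.map_bind _ _ hf, Kernel.map_pi_pi_eval]
    refine SignedMeasure.ext_of_univ_pi fun F hF => ?_
    rw [SignedMeasure.bind_pi_apply_univ_pi _ _ hF, ← hfactor s F hF, hP s F hF]
  · rintro ⟨μ, hμ, hmarg⟩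
    refine ⟨_, inferInstance, μ, fun n t => Kernel.deterministic (fun ω => ω n t) (by fun_prop),
      hμ, fun _ _ => inferInstance, fun s F hF => ?_⟩
    simp only [← SignedMeasure.bind_pi_apply_univ_pi _ _ hF, Kernel.pi_deterministic,
      SignedMeasure.bind_deterministic, hmarg, hP s F hF]

open LqHV in
/-- **Theorem 1 (LqHV modelling criterion).** An `S₁ × ⋯ × S_N`-setting correlation scenario
admits an LqHV model if and only if there exists a normalized finite signed measure `μ` on the
product space `Λ₁^{S₁} × ⋯ × Λ_N^{S_N}` returning all joint probability distributions
`P_{(s₁,…,s_N)}` of the scenario as the corresponding marginals. -/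
theorem lqhv_model_iff_normalized_signed_measure
    {N : ℕ} (hN : 2 ≤ N) {S : Fin N → ℕ} (hS : ∀ n, 1 ≤ S n)
    {Λ : Fin N → Type} [∀ n, MeasurableSpace (Λ n)]
    (P : (∀ n, Fin (S n)) → Measure (∀ n, Λ n)) [∀ s, IsProbabilityMeasure (P s)] :
    AdmitsLqHV P ↔
      ∃ μ : SignedMeasure (∀ n, Fin (S n) → Λ n),
        μ Set.univ = 1 ∧
        ∀ s : ∀ n, Fin (S n),
          μ.map (fun ω n => ω n (s n)) = (P s).toSignedMeasure :=
  lqhv_model_iff_normalized_signed_measure_general P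
end

section
/- For every state ρ on ℂ^{d₁}⊗⋯⊗ℂ^{d_N} and all positive integers S₁,…,S_N ≥ 1, there exists an S₁×⋯×S_N-setting source operator for ρ. -/
/-!
Write `Y = tr(Y) τ + Y₀` with `τ = I/d` the maximally mixed state and `Y₀` traceless, and put
`slotLift Y = tr(Y) τ^{⊗S} + ∑ₛ (Y₀ in slot s, τ elsewhere)`. Paired with `X` in slot `k` and
the identity elsewhere, each term with `s ≠ k` pairs `Y₀` with the identity and vanishes, so the
pairing is `tr(Y) tr(X)/d + tr(Y₀ X) = tr(Y X)`. Since `slotLift` commutes with adjoints, the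
tensor product of these maps over the sites, applied to the Hermitian matrix `ρ`, is a source
operator.
-/

open scoped ComplexOrder Matrix

namespace LqHV

/-- Entrywise tensor (Kronecker) product of a finite family of square complex matrices,
realized on the pi-type index. -/
def tprod {ι : Type} [Fintype ι] [DecidableEq ι] {κ : ι → Type} [∀ i, Fintype (κ i)]
    (X : ∀ i, Matrix (κ i) (κ i) ℂ) : Matrix (∀ i, κ i) (∀ i, κ i) ℂ :=
  fun a b => ∏ i, X i (a i) (b i)

variable {N : ℕ}

/-- On the tensor product space `⊗_{n} (ℂ^{d n})^{⊗ S n}`, the operator acting as `X n` in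
slot `k n` of site `n` and as the identity in all other slots. -/
def slot {d S : Fin N → ℕ} (X : ∀ n, Matrix (Fin (d n)) (Fin (d n)) ℂ) (k : ∀ n, Fin (S n)) :
    ∀ p : Σ n : Fin N, Fin (S n), Matrix (Fin (d p.1)) (Fin (d p.1)) ℂ :=
  fun p => if p.2 = k p.1 then X p.1 else 1

/-- `T` is an `S₁ × ⋯ × S_N`-setting source operator for the state `ρ` on
`ℂ^{d 1} ⊗ ⋯ ⊗ ℂ^{d N}`: a Hermitian matrix on `(ℂ^{d 1})^{⊗ S 1} ⊗ ⋯ ⊗ (ℂ^{d N})^{⊗ S N}`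
with `tr[T ((I^{⊗k₁}⊗X₁⊗I^{⊗(S₁−1−k₁)}) ⊗ ⋯ ⊗ (I^{⊗k_N}⊗X_N⊗I^{⊗(S_N−1−k_N)}))]
  = tr[ρ (X₁⊗⋯⊗X_N)]` for all matrices `X n` and all slot positions `k n`. -/
def IsSourceOp (d S : Fin N → ℕ) (ρ : Matrix (∀ n, Fin (d n)) (∀ n, Fin (d n)) ℂ)
    (T : Matrix (∀ p : Σ n : Fin N, Fin (S n), Fin (d p.1))
          (∀ p : Σ n : Fin N, Fin (S n), Fin (d p.1)) ℂ) : Prop :=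
  T.IsHermitian ∧
    ∀ (X : ∀ n, Matrix (Fin (d n)) (Fin (d n)) ℂ) (k : ∀ n, Fin (S n)),
      (T * tprod (slot X k)).trace = (ρ * tprod X).trace

end LqHV

namespace Matrix

theorem trace_submatrix_equiv {m n R : Type} [Fintype m] [Fintype n] [AddCommMonoid R]
    (M : Matrix n n R) (e : m ≃ n) : (M.submatrix e e).trace = M.trace :=
  e.sum_comp fun i => M i i

end Matrix

open Matrix

namespace LqHV

section tprod

variable {ι : Type} [Fintype ι] [DecidableEq ι] {κ : ι → Type} [∀ i, Fintype (κ i)]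

theorem tprod_mul_tprod [∀ i, DecidableEq (κ i)] (X Y : ∀ i, Matrix (κ i) (κ i) ℂ) :
    tprod X * tprod Y = tprod fun i => X i * Y i := by
  ext a b
  simp only [tprod, mul_apply, ← Finset.prod_mul_distrib]
  exact (Fintype.prod_sum fun i c => X i (a i) c * Y i c (b i)).symm

theorem trace_tprod (X : ∀ i, Matrix (κ i) (κ i) ℂ) : (tprod X).trace = ∏ i, (X i).trace := by
  simp only [trace, diag, tprod]
  exact (Fintype.prod_sum fun i c => X i c c).symm

theorem conjTranspose_tprod (X : ∀ i, Matrix (κ i) (κ i) ℂ) :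
    (tprod X)ᴴ = tprod fun i => (X i)ᴴ := by
  ext a b
  simp [tprod, star_prod]

theorem tprod_sigma {σ : ι → Type} [∀ i, Fintype (σ i)] [∀ i, DecidableEq (σ i)]
    {κ : ∀ i, σ i → Type} [∀ i s, Fintype (κ i s)]
    (X : ∀ p : Σ i, σ i, Matrix (κ p.1 p.2) (κ p.1 p.2) ℂ) :
    tprod X = (tprod fun i => tprod fun s => X ⟨i, s⟩).submatrix
      (Equiv.piCurry κ) (Equiv.piCurry κ) := by
  ext a b
  simp only [tprod, Fintype.prod_sigma, submatrix_apply]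
  rfl

end tprod

section slot

variable {σ κ : Type} [Fintype σ] [DecidableEq σ] [Fintype κ] [DecidableEq κ]

variable (κ) in
noncomputable def maximallyMixed : Matrix κ κ ℂ := (Fintype.card κ : ℂ)⁻¹ • 1

theorem trace_maximallyMixed_mul (X : Matrix κ κ ℂ) :
    (maximallyMixed κ * X).trace = (Fintype.card κ : ℂ)⁻¹ * X.trace := by
  simp [maximallyMixed]

theorem trace_maximallyMixed [Nonempty κ] : (maximallyMixed κ).trace = 1 := by
  simpa using trace_maximallyMixed_mul (1 : Matrix κ κ ℂ)

theorem conjTranspose_maximallyMixed : (maximallyMixed κ)ᴴ = maximallyMixed κ := by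
  simp [maximallyMixed]

variable (σ) in
noncomputable def slotLift (Y : Matrix κ κ ℂ) : Matrix (σ → κ) (σ → κ) ℂ :=
  Y.trace • tprod (fun _ : σ => maximallyMixed κ) +
    ∑ s, tprod (Function.update (fun _ => maximallyMixed κ) s (Y - Y.trace • maximallyMixed κ))

theorem trace_slotLift_mul_tprod_update (Y X : Matrix κ κ ℂ) (k : σ) :
    (slotLift σ Y * tprod (Function.update (fun _ => 1) k X)).trace = (Y * X).trace := by
  rcases isEmpty_or_nonempty κ with hκ | _
  · have : IsEmpty (σ → κ) := ⟨fun f => hκ.elim (f k)⟩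
    simp [trace]
  set τ := maximallyMixed κ
  set Y₀ := Y - Y.trace • τ
  have hY₀ : Y₀.trace = 0 := by simp [Y₀, τ, trace_maximallyMixed]
  have off_slot : ∀ s ≠ k,
      (tprod (Function.update (fun _ => τ) s Y₀) * tprod (Function.update (fun _ => 1) k X)).trace
        = 0 := by
    intro s hs
    rw [tprod_mul_tprod, trace_tprod]
    exact Finset.prod_eq_zero (Finset.mem_univ s) (by simp [hs, hY₀])
  have on_slot :
      (tprod (Function.update (fun _ => τ) k Y₀) * tprod (Function.update (fun _ => 1) k X)).trace
        = (Y₀ * X).trace := by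
    rw [tprod_mul_tprod, trace_tprod, Fintype.prod_eq_single k]
    · simp
    · intro t ht
      simp [ht, τ, trace_maximallyMixed]
  have mixed :
      (tprod (fun _ => τ) * tprod (Function.update (fun _ => 1) k X)).trace
        = (Fintype.card κ : ℂ)⁻¹ * X.trace := by
    rw [tprod_mul_tprod, trace_tprod, Fintype.prod_eq_single k]
    · simp [τ, trace_maximallyMixed_mul]
    · intro t ht
      simp [ht, τ, trace_maximallyMixed]
  rw [slotLift, add_mul, trace_add, smul_mul, trace_smul, Finset.sum_mul, trace_sum,
    Fintype.sum_eq_single k off_slot, on_slot, mixed]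
  simp [Y₀, τ, sub_mul, trace_sub, trace_maximallyMixed_mul]

theorem conjTranspose_slotLift (Y : Matrix κ κ ℂ) : (slotLift σ Y)ᴴ = slotLift σ Yᴴ := by
  have update_conjTranspose (s : σ) (M : Matrix κ κ ℂ) :
      (fun t => (Function.update (fun _ => maximallyMixed κ) s M t)ᴴ)
        = Function.update (fun _ => maximallyMixed κ) s Mᴴ := by
    funext t
    by_cases h : t = s <;> simp [h, conjTranspose_maximallyMixed]
  simp [slotLift, conjTranspose_sum, conjTranspose_tprod, update_conjTranspose,
    conjTranspose_maximallyMixed]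

end slot

section piLift

variable {ι : Type} [Fintype ι] [DecidableEq ι] {κ μ : ι → Type}
  [∀ i, Fintype (κ i)] [∀ i, DecidableEq (κ i)] [∀ i, Fintype (μ i)]

/-- For linear maps `Φ i` this is `(⨂ i, Φ i) ρ`, expanded in matrix units. -/
noncomputable def piLift (Φ : ∀ i, Matrix (κ i) (κ i) ℂ → Matrix (μ i) (μ i) ℂ)
    (ρ : Matrix (∀ i, κ i) (∀ i, κ i) ℂ) : Matrix (∀ i, μ i) (∀ i, μ i) ℂ :=
  ∑ a, ∑ b, ρ a b • tprod fun i => Φ i (single (a i) (b i) 1)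

theorem trace_piLift_mul_tprod [∀ i, DecidableEq (μ i)]
    {Φ : ∀ i, Matrix (κ i) (κ i) ℂ → Matrix (μ i) (μ i) ℂ}
    {Y : ∀ i, Matrix (κ i) (κ i) ℂ} {Z : ∀ i, Matrix (μ i) (μ i) ℂ}
    (hΦ : ∀ i A, (Φ i A * Z i).trace = (A * Y i).trace) (ρ : Matrix (∀ i, κ i) (∀ i, κ i) ℂ) :
    (piLift Φ ρ * tprod Z).trace = (ρ * tprod Y).trace := by
  simp only [piLift, Finset.sum_mul, smul_mul, trace_sum, trace_smul, tprod_mul_tprod,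
    trace_tprod, hΦ, trace_single_mul]
  simp [trace, mul_apply, tprod]

theorem isHermitian_piLift {Φ : ∀ i, Matrix (κ i) (κ i) ℂ → Matrix (μ i) (μ i) ℂ}
    (hΦ : ∀ i A, (Φ i A)ᴴ = Φ i Aᴴ) {ρ : Matrix (∀ i, κ i) (∀ i, κ i) ℂ} (hρ : ρ.IsHermitian) :
    (piLift Φ ρ).IsHermitian := by
  rw [IsHermitian, piLift, conjTranspose_sum, Finset.sum_comm]
  refine Finset.sum_congr rfl fun a _ => ?_
  rw [conjTranspose_sum]
  refine Finset.sum_congr rfl fun b _ => ?_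
  simp [conjTranspose_tprod, hΦ, hρ.apply]

end piLift

theorem slot_mk_eq_update {N : ℕ} {d S : Fin N → ℕ} (X : ∀ n, Matrix (Fin (d n)) (Fin (d n)) ℂ)
    (k : ∀ n, Fin (S n)) (n : Fin N) :
    (fun s => slot X k ⟨n, s⟩) = Function.update (fun _ => 1) (k n) (X n) := by
  funext s
  by_cases h : s = k n
  · subst h
    simp [slot]
  · simp [slot, h]

end LqHV

open LqHV in
theorem exists_source_operator_general {N : ℕ} (d S : Fin N → ℕ)
    (ρ : Matrix (∀ n, Fin (d n)) (∀ n, Fin (d n)) ℂ)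
    (hρ : ρ.PosSemidef) :
    ∃ T, IsSourceOp d S ρ T := by
  let e := Equiv.piCurry fun n (_ : Fin (S n)) => Fin (d n)
  refine ⟨(piLift (fun n => slotLift (Fin (S n))) ρ).submatrix e e,
    (isHermitian_piLift (fun _ => conjTranspose_slotLift) hρ.isHermitian).submatrix e,
    fun X k => ?_⟩
  rw [tprod_sigma (κ := fun n _ => Fin (d n)), submatrix_mul_equiv, trace_submatrix_equiv]
  simp only [slot_mk_eq_update]
  exact trace_piLift_mul_tprod (fun n A => trace_slotLift_mul_tprod_update A (X n) (k n)) ρ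

open LqHV in
/-- **Proposition 1.** For every state `ρ` on `ℂ^{d₁} ⊗ ⋯ ⊗ ℂ^{d_N}` and all positive integers
`S₁, …, S_N ≥ 1`, there exists an `S₁ × ⋯ × S_N`-setting source operator for `ρ`. -/
theorem exists_source_operator {N : ℕ} (d S : Fin N → ℕ) (hS : ∀ n, 1 ≤ S n)
    (ρ : Matrix (∀ n, Fin (d n)) (∀ n, Fin (d n)) ℂ)
    (hρ : ρ.PosSemidef) (hρtr : ρ.trace = 1) :
    ∃ T, IsSourceOp d S ρ T :=
  exists_source_operator_general d S ρ hρ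
end

section
/- The covering norm ‖W‖_cov := inf{tr W_cov : W_cov a covering of W} is a norm on the real vector space of Hermitian matrices on ℂ^{k₁}⊗⋯⊗ℂ^{k_m}: (i) ‖W‖_cov ≥ 0, with ‖W‖_cov = 0 if and only if W = 0; (ii) ‖αW‖_cov = |α|·‖W‖_cov for every real α; (iii) ‖W₁ + W₂‖_cov ≤ ‖W₁‖_cov + ‖W₂‖_cov. -/
open scoped ComplexOrder Matrix

namespace LqHV

/-- Elementary (product) vector `ψ₁ ⊗ ⋯ ⊗ ψ_m` of a family of vectors. -/
def tvec {ι : Type} [Fintype ι] [DecidableEq ι] {κ : ι → Type} (ψ : ∀ i, κ i → ℂ) :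
    (∀ i, κ i) → ℂ :=
  fun a => ∏ i, ψ i (a i)

/-- A matrix `Z` on the tensor product space `ℂ^{k₁} ⊗ ⋯ ⊗ ℂ^{k_m}` is tensor positive if
`⟨ψ₁⊗⋯⊗ψ_m, Z (ψ₁⊗⋯⊗ψ_m)⟩ ≥ 0` for all vectors `ψ_j`. -/
def TensorPos {ι : Type} [Fintype ι] [DecidableEq ι] {κ : ι → Type} [∀ i, Fintype (κ i)]
    (Z : Matrix (∀ i, κ i) (∀ i, κ i) ℂ) : Prop :=
  ∀ ψ : ∀ i, κ i → ℂ, 0 ≤ star (tvec ψ) ⬝ᵥ Z.mulVec (tvec ψ)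

/-- `C` is a covering of `Z`: a tensor positive matrix such that `C + Z` and `C - Z` are both
tensor positive. -/
def IsCovering {ι : Type} [Fintype ι] [DecidableEq ι] {κ : ι → Type} [∀ i, Fintype (κ i)]
    (Z C : Matrix (∀ i, κ i) (∀ i, κ i) ℂ) : Prop :=
  TensorPos C ∧ TensorPos (C + Z) ∧ TensorPos (C - Z)

/-- The covering norm `‖Z‖_cov = inf{tr C : C a covering of Z}`. -/
noncomputable def covNorm {ι : Type} [Fintype ι] [DecidableEq ι] {κ : ι → Type}
    [∀ i, Fintype (κ i)] (Z : Matrix (∀ i, κ i) (∀ i, κ i) ℂ) : ℝ :=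
  sInf ((fun C => (Matrix.trace C).re) '' {C | IsCovering Z C})

/-- The absolute value `|W| := √(Wᴴ W)` of a matrix (`= √(W²)` for Hermitian `W`). -/
noncomputable def matAbs {n : Type} [Fintype n] [DecidableEq n]
    (W : Matrix n n ℂ) : Matrix n n ℂ :=
  ((Matrix.posSemidef_conjTranspose_mul_self W).1.eigenvectorUnitary : Matrix n n ℂ) *
    Matrix.diagonal ((↑) ∘ Real.sqrt ∘ (Matrix.posSemidef_conjTranspose_mul_self W).1.eigenvalues) *
    (star ((Matrix.posSemidef_conjTranspose_mul_self W).1.eigenvectorUnitary : Matrix n n ℂ))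

/-- The trace norm `‖W‖₁ := tr √(Wᴴ W)`. -/
noncomputable def traceNorm {n : Type} [Fintype n] [DecidableEq n]
    (W : Matrix n n ℂ) : ℝ :=
  ((matAbs W).trace).re

end LqHV


/-!
Coverings add, scale by positive reals, and `C` covers `Z` iff it covers `-Z`; this gives
homogeneity and the triangle inequality for the infimum, as soon as every Hermitian `Z` has a
covering (`‖Z‖ • 1`, with the operator norm).

Definiteness rests on the bound `‖Z a b‖ ≤ tr C` for every covering `C`. Average over the `4 ^ m`
phase choices `e` the product vectors `v_e = ⊗ᵢ (δ_{aᵢ} + I ^ eᵢ δ_{bᵢ})`: by polarization in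
each factor, the average of `conj (v_e b) ⟪v_e, Z v_e⟫` is `Z a b`, while each `|⟪v_e, Z v_e⟫|`
is at most `⟪v_e, C v_e⟫`, whose average is a partial sum of the nonnegative diagonal of `C`.
-/

open scoped Pointwise MatrixOrder Matrix.Norms.L2Operator
open ComplexConjugate

lemma Complex.norm_le_re_of_nonneg_add_of_nonneg_sub {z w : ℂ} (h₁ : 0 ≤ z + w)
    (h₂ : 0 ≤ z - w) : ‖w‖ ≤ z.re := by
  rw [Complex.nonneg_iff] at h₁ h₂
  simp only [Complex.add_re, Complex.add_im, Complex.sub_re, Complex.sub_im] at h₁ h₂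
  have hw : w.im = 0 := by linarith [h₁.2, h₂.2]
  rw [← Complex.abs_re_eq_norm.2 hw, abs_le]
  constructor <;> linarith [h₁.1, h₂.1]

namespace LqHV

section QuadraticForm

variable {n E : Type} [Fintype n] [Fintype E]

lemma star_dotProduct_mulVec_eq_sum (Z : Matrix n n ℂ) (v : n → ℂ) :
    star v ⬝ᵥ Z *ᵥ v = ∑ c, ∑ d, Z c d * (conj (v c) * v d) := by
  simp only [dotProduct, Matrix.mulVec, Finset.mul_sum, Pi.star_apply, Complex.star_def]
  refine Finset.sum_congr rfl fun c _ => Finset.sum_congr rfl fun d _ => ?_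
  ring

lemma sum_mul_star_dotProduct_mulVec (Z : Matrix n n ℂ) (w : E → ℂ) (T : E → n → ℂ) :
    ∑ ε, w ε * (star (T ε) ⬝ᵥ Z *ᵥ T ε) =
      ∑ c, ∑ d, Z c d * ∑ ε, w ε * (conj (T ε c) * T ε d) := by
  simp only [star_dotProduct_mulVec_eq_sum, Finset.mul_sum]
  rw [Finset.sum_comm]
  refine Finset.sum_congr rfl fun c _ => ?_
  rw [Finset.sum_comm]
  refine Finset.sum_congr rfl fun d _ => Finset.sum_congr rfl fun ε _ => ?_
  ring

end QuadraticForm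

section TensorPos

variable {ι : Type} [Fintype ι] [DecidableEq ι] {κ : ι → Type} [∀ i, Fintype (κ i)]

lemma _root_.Matrix.PosSemidef.tensorPos {Z : Matrix (∀ i, κ i) (∀ i, κ i) ℂ}
    (hZ : Z.PosSemidef) : TensorPos Z :=
  fun _ => hZ.dotProduct_mulVec_nonneg _

lemma TensorPos.add {Y Z : Matrix (∀ i, κ i) (∀ i, κ i) ℂ} (hY : TensorPos Y)
    (hZ : TensorPos Z) : TensorPos (Y + Z) := fun ψ => by
  rw [Matrix.add_mulVec, dotProduct_add]
  exact add_nonneg (hY ψ) (hZ ψ)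

lemma tensorPos_real_smul_iff {Z : Matrix (∀ i, κ i) (∀ i, κ i) ℂ} {r : ℝ} (hr : 0 < r) :
    TensorPos ((r : ℂ) • Z) ↔ TensorPos Z := by
  refine forall_congr' fun ψ => ?_
  have hr' : (0 : ℂ) < r := Complex.zero_lt_real.2 hr
  rw [Matrix.smul_mulVec, dotProduct_smul, smul_eq_mul]
  exact ⟨fun h => (mul_le_mul_iff_right₀ hr').1 (by rwa [mul_zero]), mul_nonneg hr'.le⟩

lemma TensorPos.diag_nonneg {C : Matrix (∀ i, κ i) (∀ i, κ i) ℂ} (hC : TensorPos C)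
    (a : ∀ i, κ i) : 0 ≤ C a a := by
  classical
  have hsingle : tvec (fun i => Pi.single (a i) 1) = Pi.single a (1 : ℂ) := by
    funext c
    simp only [tvec, Pi.single_apply, Fintype.prod_boole, funext_iff]
  simpa [hsingle, star_dotProduct_mulVec_eq_sum, Pi.single_apply] using
    hC fun i => Pi.single (a i) 1

lemma TensorPos.sum_diag_le_trace {C : Matrix (∀ i, κ i) (∀ i, κ i) ℂ} (hC : TensorPos C)
    (s : Finset (∀ i, κ i)) : ∑ c ∈ s, C c c ≤ C.trace :=
  Finset.sum_le_sum_of_subset_of_nonneg s.subset_univ fun c _ _ => hC.diag_nonneg c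

lemma TensorPos.trace_nonneg {C : Matrix (∀ i, κ i) (∀ i, κ i) ℂ} (hC : TensorPos C) :
    0 ≤ C.trace :=
  Finset.sum_nonneg fun c _ => hC.diag_nonneg c

end TensorPos

section Covering

variable {ι : Type} [Fintype ι] [DecidableEq ι] {κ : ι → Type} [∀ i, Fintype (κ i)]
  {Z C : Matrix (∀ i, κ i) (∀ i, κ i) ℂ}

lemma isCovering_neg_iff : IsCovering (-Z) C ↔ IsCovering Z C := by
  simp only [IsCovering, sub_neg_eq_add, ← sub_eq_add_neg]
  tauto

lemma isCovering_real_smul_iff {r : ℝ} (hr : 0 < r) :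
    IsCovering ((r : ℂ) • Z) ((r : ℂ) • C) ↔ IsCovering Z C := by
  simp only [IsCovering, ← smul_add, ← smul_sub, tensorPos_real_smul_iff hr]

lemma IsCovering.add {Z₁ Z₂ C₁ C₂ : Matrix (∀ i, κ i) (∀ i, κ i) ℂ} (h₁ : IsCovering Z₁ C₁)
    (h₂ : IsCovering Z₂ C₂) : IsCovering (Z₁ + Z₂) (C₁ + C₂) := by
  refine ⟨h₁.1.add h₂.1, ?_, ?_⟩
  · rw [add_add_add_comm]
    exact h₁.2.1.add h₂.2.1
  · rw [add_sub_add_comm]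
    exact h₁.2.2.add h₂.2.2

lemma exists_isCovering (hZ : Z.IsHermitian) : ∃ C, IsCovering Z C := by
  classical
  refine ⟨algebraMap ℝ _ ‖Z‖, ?_, ?_, ?_⟩ <;> refine (Matrix.nonneg_iff_posSemidef.1 ?_).tensorPos
  · exact algebraMap_nonneg _ (norm_nonneg Z)
  · exact neg_le_iff_add_nonneg'.1 (IsSelfAdjoint.neg_algebraMap_norm_le_self hZ)
  · exact sub_nonneg.2 (IsSelfAdjoint.le_algebraMap_norm_self hZ)

end Covering

section PhaseVectors

def phaseVec {α : Type} [DecidableEq α] (a b : α) (e : Fin 4) : α → ℂ :=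
  fun x => if x = a then 1 else if x = b then Complex.I ^ (e : ℕ) else 0

lemma sum_conj_phaseVec_mul {α : Type} [DecidableEq α] (a b c d : α) :
    ∑ e, conj (phaseVec a b e c) * phaseVec a b e d =
      if c = d ∧ (c = a ∨ c = b) then 4 else 0 := by
  simp only [phaseVec, Fin.sum_univ_four]
  split_ifs <;> simp_all [pow_succ] <;> grind

lemma sum_conj_phaseVec_mul_conj_mul {α : Type} [DecidableEq α] (a b c d : α) :
    ∑ e, conj (phaseVec a b e b) * (conj (phaseVec a b e c) * phaseVec a b e d) =
      if c = a ∧ d = b then 4 else 0 := by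
  simp only [phaseVec, Fin.sum_univ_four]
  split_ifs <;> simp_all [pow_succ] <;> grind

lemma norm_phaseVec_le_one {α : Type} [DecidableEq α] (a b : α) (e : Fin 4) (x : α) :
    ‖phaseVec a b e x‖ ≤ 1 := by
  unfold phaseVec
  split_ifs <;> simp

variable {ι : Type} [Fintype ι] [DecidableEq ι]

lemma sum_pi_prod_eq_ite {γ : Type} [Fintype γ] (f : ι → γ → ℂ) (P : ι → Prop)
    [DecidablePred P] (r : ℂ) (hf : ∀ i, ∑ e, f i e = if P i then r else 0) :
    ∑ ε : ι → γ, ∏ i, f i (ε i) = if ∀ i, P i then r ^ Fintype.card ι else 0 := by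
  rw [← Fintype.prod_sum, Finset.prod_congr rfl fun i _ => hf i, Fintype.prod_ite_zero,
    Finset.prod_const, Finset.card_univ]

variable {κ : ι → Type} [∀ i, DecidableEq (κ i)]

def phaseTVec (a b : ∀ i, κ i) (ε : ι → Fin 4) : (∀ i, κ i) → ℂ :=
  tvec fun i => phaseVec (a i) (b i) (ε i)

lemma sum_conj_phaseTVec_mul (a b c d : ∀ i, κ i) :
    ∑ ε, conj (phaseTVec a b ε c) * phaseTVec a b ε d =
      if c = d ∧ ∀ i, c i = a i ∨ c i = b i then 4 ^ Fintype.card ι else 0 := by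
  simp only [phaseTVec, tvec, map_prod, ← Finset.prod_mul_distrib]
  rw [sum_pi_prod_eq_ite _ _ _ fun i => sum_conj_phaseVec_mul (a i) (b i) (c i) (d i)]
  simp only [forall_and, ← funext_iff]

lemma sum_conj_phaseTVec_mul_conj_mul (a b c d : ∀ i, κ i) :
    ∑ ε, conj (phaseTVec a b ε b) * (conj (phaseTVec a b ε c) * phaseTVec a b ε d) =
      if c = a ∧ d = b then 4 ^ Fintype.card ι else 0 := by
  simp only [phaseTVec, tvec, map_prod, ← Finset.prod_mul_distrib]
  rw [sum_pi_prod_eq_ite _ _ _ fun i => sum_conj_phaseVec_mul_conj_mul (a i) (b i) (c i) (d i)]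
  simp only [forall_and, ← funext_iff]

lemma norm_phaseTVec_le_one (a b : ∀ i, κ i) (ε : ι → Fin 4) (x : ∀ i, κ i) :
    ‖phaseTVec a b ε x‖ ≤ 1 := by
  rw [phaseTVec, tvec, norm_prod]
  exact Finset.prod_le_one (fun _ _ => norm_nonneg _) fun i _ => norm_phaseVec_le_one _ _ _ _

end PhaseVectors

section CovNorm

variable {ι : Type} [Fintype ι] [DecidableEq ι] {κ : ι → Type} [∀ i, Fintype (κ i)]

lemma IsCovering.norm_dotProduct_mulVec_le {Z C : Matrix (∀ i, κ i) (∀ i, κ i) ℂ}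
    (h : IsCovering Z C) (ψ : ∀ i, κ i → ℂ) :
    ‖star (tvec ψ) ⬝ᵥ Z *ᵥ tvec ψ‖ ≤ (star (tvec ψ) ⬝ᵥ C *ᵥ tvec ψ).re := by
  have hadd := h.2.1 ψ
  have hsub := h.2.2 ψ
  rw [Matrix.add_mulVec, dotProduct_add] at hadd
  rw [Matrix.sub_mulVec, dotProduct_sub] at hsub
  exact Complex.norm_le_re_of_nonneg_add_of_nonneg_sub hadd hsub

lemma IsCovering.norm_apply_le_trace {Z C : Matrix (∀ i, κ i) (∀ i, κ i) ℂ}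
    (h : IsCovering Z C) (a b : ∀ i, κ i) : ‖Z a b‖ ≤ C.trace.re := by
  classical
  have hZ_avg : ∑ ε, conj (phaseTVec a b ε b) * (star (phaseTVec a b ε) ⬝ᵥ Z *ᵥ phaseTVec a b ε) =
      Z a b * 4 ^ Fintype.card ι := by
    simp only [sum_mul_star_dotProduct_mulVec, sum_conj_phaseTVec_mul_conj_mul, mul_ite, mul_zero,
      ite_and, Finset.sum_ite_irrel, Finset.sum_const_zero, Finset.sum_ite_eq', Finset.mem_univ,
      if_true]
  have hC_avg : ∑ ε, star (phaseTVec a b ε) ⬝ᵥ C *ᵥ phaseTVec a b ε =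
      (∑ c ∈ {c | ∀ i, c i = a i ∨ c i = b i}, C c c) * 4 ^ Fintype.card ι := by
    simpa only [one_mul, sum_conj_phaseTVec_mul, mul_ite, mul_zero, ite_and, Finset.sum_ite_eq,
      Finset.mem_univ, if_true, Finset.sum_filter, Finset.sum_mul, ite_mul, zero_mul] using
      sum_mul_star_dotProduct_mulVec C (fun _ => 1) (phaseTVec a b)
  refine le_of_mul_le_mul_left ?_ (by positivity : (0 : ℝ) < 4 ^ Fintype.card ι)
  calc 4 ^ Fintype.card ι * ‖Z a b‖
      = ‖∑ ε, conj (phaseTVec a b ε b) * (star (phaseTVec a b ε) ⬝ᵥ Z *ᵥ phaseTVec a b ε)‖ := by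
        simp [hZ_avg, mul_comm]
    _ ≤ ∑ ε, ‖star (phaseTVec a b ε) ⬝ᵥ Z *ᵥ phaseTVec a b ε‖ := by
      refine (norm_sum_le _ _).trans (Finset.sum_le_sum fun ε _ => ?_)
      rw [norm_mul, Complex.norm_conj]
      exact mul_le_of_le_one_left (norm_nonneg _) (norm_phaseTVec_le_one a b ε b)
    _ ≤ ∑ ε, (star (phaseTVec a b ε) ⬝ᵥ C *ᵥ phaseTVec a b ε).re :=
      Finset.sum_le_sum fun ε _ => h.norm_dotProduct_mulVec_le _
    _ ≤ 4 ^ Fintype.card ι * C.trace.re := by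
      rw [← Complex.re_sum, hC_avg, ← Complex.ofReal_ofNat, ← Complex.ofReal_pow, Complex.re_mul_ofReal,
        mul_comm]
      exact mul_le_mul_of_nonneg_left (Complex.le_def.1 (h.1.sum_diag_le_trace _)).1 (by positivity)

def coveringTraces (Z : Matrix (∀ i, κ i) (∀ i, κ i) ℂ) : Set ℝ :=
  (fun C => C.trace.re) '' {C | IsCovering Z C}

variable {Z : Matrix (∀ i, κ i) (∀ i, κ i) ℂ}

lemma IsCovering.trace_re_mem {C : Matrix (∀ i, κ i) (∀ i, κ i) ℂ} (h : IsCovering Z C) :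
    C.trace.re ∈ coveringTraces Z :=
  ⟨C, h, rfl⟩

lemma covNorm_eq_sInf : covNorm Z = sInf (coveringTraces Z) := rfl

lemma nonneg_of_mem_coveringTraces {x : ℝ} (hx : x ∈ coveringTraces Z) : 0 ≤ x := by
  obtain ⟨C, hC, rfl⟩ := hx
  exact (Complex.nonneg_iff.1 hC.1.trace_nonneg).1

lemma bddBelow_coveringTraces : BddBelow (coveringTraces Z) :=
  ⟨0, fun _ => nonneg_of_mem_coveringTraces⟩

lemma covNorm_nonneg : 0 ≤ covNorm Z :=
  Real.sInf_nonneg fun _ => nonneg_of_mem_coveringTraces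

lemma norm_apply_le_covNorm (hZ : ∃ C, IsCovering Z C) (a b : ∀ i, κ i) :
    ‖Z a b‖ ≤ covNorm Z := by
  obtain ⟨C, hC⟩ := hZ
  refine le_csInf ⟨_, hC.trace_re_mem⟩ ?_
  rintro _ ⟨C', hC', rfl⟩
  exact hC'.norm_apply_le_trace a b

lemma covNorm_zero : covNorm (0 : Matrix (∀ i, κ i) (∀ i, κ i) ℂ) = 0 := by
  refine le_antisymm (csInf_le bddBelow_coveringTraces ⟨0, ?_, by simp⟩) covNorm_nonneg
  have h0 : TensorPos (0 : Matrix (∀ i, κ i) (∀ i, κ i) ℂ) := by simp [TensorPos]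
  exact ⟨h0, by simpa using h0, by simpa using h0⟩

lemma covNorm_eq_zero_iff (hZ : ∃ C, IsCovering Z C) : covNorm Z = 0 ↔ Z = 0 := by
  refine ⟨fun h => ?_, fun h => h ▸ covNorm_zero⟩
  ext a b
  exact norm_le_zero_iff.1 (h ▸ norm_apply_le_covNorm hZ a b)

lemma covNorm_neg : covNorm (-Z) = covNorm Z := by
  simp only [covNorm, isCovering_neg_iff]

lemma coveringTraces_real_smul {r : ℝ} (hr : 0 < r) :
    coveringTraces ((r : ℂ) • Z) = r • coveringTraces Z := by
  have htr (C : Matrix (∀ i, κ i) (∀ i, κ i) ℂ) : ((r : ℂ) • C).trace.re = r * C.trace.re := by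
    rw [Matrix.trace_smul, smul_eq_mul, Complex.re_ofReal_mul]
  ext x
  constructor
  · rintro ⟨C, hC, rfl⟩
    have hC' : (r : ℂ) • (((r⁻¹ : ℝ) : ℂ) • C) = C := by
      rw [smul_smul, ← Complex.ofReal_mul, mul_inv_cancel₀ hr.ne', Complex.ofReal_one, one_smul]
    rw [← hC'] at hC ⊢
    exact ⟨_, ⟨_, (isCovering_real_smul_iff hr).1 hC, rfl⟩, (htr _).symm⟩
  · rintro ⟨_, ⟨C, hC, rfl⟩, rfl⟩
    exact ⟨_, (isCovering_real_smul_iff hr).2 hC, htr C⟩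

lemma covNorm_real_smul (α : ℝ) : covNorm ((α : ℂ) • Z) = |α| * covNorm Z := by
  have hpos {r : ℝ} (hr : 0 < r) : covNorm ((r : ℂ) • Z) = r * covNorm Z := by
    rw [covNorm_eq_sInf, coveringTraces_real_smul hr, Real.sInf_smul_of_nonneg hr.le, smul_eq_mul,
      covNorm_eq_sInf]
  rcases lt_trichotomy α 0 with hα | rfl | hα
  · have hneg : (α : ℂ) • Z = -(((-α : ℝ) : ℂ) • Z) := by simp
    rw [hneg, covNorm_neg, hpos (neg_pos.2 hα), abs_of_neg hα]
  · simp [covNorm_zero]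
  · rw [hpos hα, abs_of_pos hα]

lemma covNorm_add_le {Z₁ Z₂ : Matrix (∀ i, κ i) (∀ i, κ i) ℂ} (h₁ : ∃ C, IsCovering Z₁ C)
    (h₂ : ∃ C, IsCovering Z₂ C) : covNorm (Z₁ + Z₂) ≤ covNorm Z₁ + covNorm Z₂ := by
  obtain ⟨C₁, hC₁⟩ := h₁
  obtain ⟨C₂, hC₂⟩ := h₂
  rw [covNorm_eq_sInf, covNorm_eq_sInf, covNorm_eq_sInf, ← csInf_add ⟨_, hC₁.trace_re_mem⟩
    bddBelow_coveringTraces ⟨_, hC₂.trace_re_mem⟩ bddBelow_coveringTraces]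
  refine csInf_le_csInf bddBelow_coveringTraces
    ⟨_, Set.add_mem_add hC₁.trace_re_mem hC₂.trace_re_mem⟩ ?_
  rintro _ ⟨_, ⟨D₁, hD₁, rfl⟩, _, ⟨D₂, hD₂, rfl⟩, rfl⟩
  exact ⟨D₁ + D₂, hD₁.add hD₂, by simp [Matrix.trace_add]⟩

end CovNorm

end LqHV

open LqHV in
/-- The covering norm is a norm on the real vector space of Hermitian matrices on
`ℂ^{k₁} ⊗ ⋯ ⊗ ℂ^{k_m}`: it is nonnegative and vanishes exactly at `0`, it is absolutely
homogeneous for real scalars, and it satisfies the triangle inequality. -/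
theorem covNorm_is_norm {m : ℕ} {k : Fin m → ℕ}
    (W W₁ W₂ : Matrix (∀ i, Fin (k i)) (∀ i, Fin (k i)) ℂ)
    (hW : W.IsHermitian) (hW₁ : W₁.IsHermitian) (hW₂ : W₂.IsHermitian) (α : ℝ) :
    (0 ≤ covNorm W ∧ (covNorm W = 0 ↔ W = 0)) ∧
      covNorm ((α : ℂ) • W) = |α| * covNorm W ∧
      covNorm (W₁ + W₂) ≤ covNorm W₁ + covNorm W₂ :=
  ⟨⟨covNorm_nonneg, covNorm_eq_zero_iff (exists_isCovering hW)⟩, covNorm_real_smul α,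
    covNorm_add_le (exists_isCovering hW₁) (exists_isCovering hW₂)⟩
end

section
/- Let an S₁×⋯×S_N-setting correlation scenario admit a normalized finite signed measure μ on Λ₁^{S₁}×⋯×Λ_N^{S_N} returning all of its joint distributions as marginals, and let Ψ = (ψ_{(s₁,…,s_N)}) be a family of bounded measurable real-valued functions on Λ₁×⋯×Λ_N. Then B_inf(Ψ) − ((‖μ‖_var − 1)/2)·(B_sup(Ψ) − B_inf(Ψ)) ≤ Σ_{s₁,…,s_N} ∫ ψ_{(s₁,…,s_N)} dP_{(s₁,…,s_N)} ≤ B_sup(Ψ) + ((‖μ‖_var − 1)/2)·(B_sup(Ψ) − B_inf(Ψ)), where ‖μ‖_var is the total variation norm of μ. -/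
/-!
Jordan-decompose `μ = μ⁺ - μ⁻`. Pulling each marginal condition back along its projection gives
`∫ ψ_s dP_s = ∫ ψ_s ∘ π_s dμ⁺ - ∫ ψ_s ∘ π_s dμ⁻`, so the sum of the averages is
`∫ F dμ⁺ - ∫ F dμ⁻` for the LHV sum `F λ = ∑_s ψ_s (λ^{(s)})`, whose values lie in
`[B_inf, B_sup]`. Normalization gives `μ⁺(univ) = μ⁻(univ) + 1`, and `‖μ‖_var = μ⁺(univ) + μ⁻(univ)`,
so `μ⁻(univ) = (‖μ‖_var - 1) / 2`; the bounds follow from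
`B_inf ν(univ) ≤ ∫ F dν ≤ B_sup ν(univ)` for `ν = μ⁺, μ⁻`.
-/

namespace MeasureTheory

theorem integral_le_measureReal_univ_mul {α : Type*} [MeasurableSpace α] {ν : Measure α}
    [IsFiniteMeasure ν] {F : α → ℝ} (hF : Integrable F ν) {M : ℝ} (hM : ∀ x, F x ≤ M) :
    ∫ x, F x ∂ν ≤ ν.real Set.univ * M := by
  simpa only [integral_const, smul_eq_mul] using integral_mono hF (integrable_const M) hM

theorem measureReal_univ_mul_le_integral {α : Type*} [MeasurableSpace α] {ν : Measure α}
    [IsFiniteMeasure ν] {F : α → ℝ} (hF : Integrable F ν) {m : ℝ} (hm : ∀ x, m ≤ F x) :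
    ν.real Set.univ * m ≤ ∫ x, F x ∂ν := by
  simpa only [integral_const, smul_eq_mul] using integral_mono (integrable_const m) hF hm

namespace SignedMeasure

variable {α β : Type*} [MeasurableSpace α] [MeasurableSpace β]

theorem map_posPart_eq_add_map_negPart (μ : SignedMeasure α) {f : α → β} (hf : Measurable f)
    {P : Measure β} [IsFiniteMeasure P] (hμP : μ.map f = P.toSignedMeasure) :
    μ.toJordanDecomposition.posPart.map f = P + μ.toJordanDecomposition.negPart.map f := by
  ext A hA
  have h := congrArg (· A) hμP
  simp only [VectorMeasure.map_apply μ hf hA, μ.apply_eq_posPart_real_sub_negPart_real (hf hA),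
    Measure.toSignedMeasure_apply_measurable hA] at h
  rw [Measure.map_apply hf hA, Measure.add_apply, Measure.map_apply hf hA,
    ← ENNReal.toReal_eq_toReal_iff' (measure_ne_top _ _)
      (ENNReal.add_ne_top.2 ⟨measure_ne_top _ _, measure_ne_top _ _⟩),
    ENNReal.toReal_add (measure_ne_top _ _) (measure_ne_top _ _)]
  simp only [measureReal_def] at h
  linarith

theorem integral_eq_integral_posPart_sub_integral_negPart_of_map_eq (μ : SignedMeasure α)
    {f : α → β} (hf : Measurable f) {P : Measure β} [IsFiniteMeasure P]
    (hμP : μ.map f = P.toSignedMeasure) {g : β → ℝ} (hg : Measurable g) {C : ℝ}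
    (hC : ∀ y, |g y| ≤ C) :
    ∫ y, g y ∂P = ∫ x, g (f x) ∂μ.toJordanDecomposition.posPart
      - ∫ x, g (f x) ∂μ.toJordanDecomposition.negPart := by
  have hint : ∀ (ν : Measure β) [IsFiniteMeasure ν], Integrable g ν := fun ν _ =>
    .of_bound hg.aestronglyMeasurable C (ae_of_all _ hC)
  rw [← integral_map hf.aemeasurable hg.aestronglyMeasurable,
    ← integral_map hf.aemeasurable hg.aestronglyMeasurable, map_posPart_eq_add_map_negPart μ hf hμP,
    integral_add_measure (hint P) (hint _), add_sub_cancel_right]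

theorem sum_integral_eq_integral_posPart_sub_integral_negPart {ι : Type*} [Fintype ι]
    (μ : SignedMeasure α) {f : ι → α → β} (hf : ∀ i, Measurable (f i)) {P : ι → Measure β}
    [∀ i, IsFiniteMeasure (P i)] (hμP : ∀ i, μ.map (f i) = (P i).toSignedMeasure)
    {g : ι → β → ℝ} (hg : ∀ i, Measurable (g i)) {C : ι → ℝ} (hC : ∀ i y, |g i y| ≤ C i) :
    ∑ i, ∫ y, g i y ∂P i = ∫ x, ∑ i, g i (f i x) ∂μ.toJordanDecomposition.posPart
      - ∫ x, ∑ i, g i (f i x) ∂μ.toJordanDecomposition.negPart := by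
  have hint (ν : Measure α) [IsFiniteMeasure ν] (i : ι) : Integrable (fun x => g i (f i x)) ν :=
    .of_bound ((hg i).comp (hf i)).aestronglyMeasurable (C i) (ae_of_all _ fun _ => hC i _)
  rw [integral_finsetSum _ fun i _ => hint _ i, integral_finsetSum _ fun i _ => hint _ i,
    ← Finset.sum_sub_distrib]
  exact Finset.sum_congr rfl fun i _ =>
    μ.integral_eq_integral_posPart_sub_integral_negPart_of_map_eq (hf i) (hμP i) (hg i) (hC i)

theorem posPart_real_univ_eq_add_one (μ : SignedMeasure α) (hμ : μ Set.univ = 1) :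
    μ.toJordanDecomposition.posPart.real Set.univ
      = μ.toJordanDecomposition.negPart.real Set.univ + 1 := by
  rw [μ.apply_eq_posPart_real_sub_negPart_real MeasurableSet.univ] at hμ
  linarith

theorem negPart_real_univ_eq (μ : SignedMeasure α) (hμ : μ Set.univ = 1) :
    μ.toJordanDecomposition.negPart.real Set.univ = (μ.totalVariation.real Set.univ - 1) / 2 := by
  rw [totalVariation, measureReal_add_apply, posPart_real_univ_eq_add_one μ hμ]
  ring

theorem integral_posPart_sub_integral_negPart_le (μ : SignedMeasure α) (hμ : μ Set.univ = 1)
    {F : α → ℝ} (hF : Measurable F) {m M : ℝ} (hm : ∀ x, m ≤ F x) (hM : ∀ x, F x ≤ M) :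
    ∫ x, F x ∂μ.toJordanDecomposition.posPart - ∫ x, F x ∂μ.toJordanDecomposition.negPart
      ≤ M + (μ.totalVariation.real Set.univ - 1) / 2 * (M - m) := by
  have hint : ∀ (ν : Measure α) [IsFiniteMeasure ν], Integrable F ν := fun ν _ =>
    .of_bound hF.aestronglyMeasurable _ (ae_of_all _ fun x => abs_le_max_abs_abs (hm x) (hM x))
  have hpos := integral_le_measureReal_univ_mul (hint μ.toJordanDecomposition.posPart) hM
  have hneg := measureReal_univ_mul_le_integral (hint μ.toJordanDecomposition.negPart) hm
  rw [← negPart_real_univ_eq μ hμ]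
  linear_combination hpos + hneg + M * posPart_real_univ_eq_add_one μ hμ

theorem le_integral_posPart_sub_integral_negPart (μ : SignedMeasure α) (hμ : μ Set.univ = 1)
    {F : α → ℝ} (hF : Measurable F) {m M : ℝ} (hm : ∀ x, m ≤ F x) (hM : ∀ x, F x ≤ M) :
    m - (μ.totalVariation.real Set.univ - 1) / 2 * (M - m)
      ≤ ∫ x, F x ∂μ.toJordanDecomposition.posPart - ∫ x, F x ∂μ.toJordanDecomposition.negPart := by
  have := integral_posPart_sub_integral_negPart_le μ hμ hF.neg (fun x => neg_le_neg (hM x))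
    (fun x => neg_le_neg (hm x))
  simp only [Pi.neg_apply, integral_neg] at this
  linarith

end SignedMeasure

end MeasureTheory

open MeasureTheory

theorem bell_analog_bounds_general
    {N : ℕ} {S : Fin N → ℕ}
    {Λ : Fin N → Type} [∀ n, MeasurableSpace (Λ n)]
    (P : (∀ n, Fin (S n)) → Measure (∀ n, Λ n)) [∀ s, IsProbabilityMeasure (P s)]
    (μ : SignedMeasure (∀ n, Fin (S n) → Λ n))
    (hnorm : μ Set.univ = 1)
    (hmarg : ∀ s : ∀ n, Fin (S n),
      μ.map (fun ω n => ω n (s n)) = (P s).toSignedMeasure)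
    (ψ : (∀ n, Fin (S n)) → (∀ n, Λ n) → ℝ)
    (hmeas : ∀ s, Measurable (ψ s))
    (hbdd : ∀ s, ∃ C, ∀ x, |ψ s x| ≤ C) :
    (sInf {x : ℝ | ∃ lam : ∀ n, Fin (S n) → Λ n,
          x = ∑ s : ∀ n, Fin (S n), ψ s (fun n => lam n (s n))}
        - ((μ.totalVariation Set.univ).toReal - 1) / 2 *
          (sSup {x : ℝ | ∃ lam : ∀ n, Fin (S n) → Λ n,
              x = ∑ s : ∀ n, Fin (S n), ψ s (fun n => lam n (s n))}
            - sInf {x : ℝ | ∃ lam : ∀ n, Fin (S n) → Λ n,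
              x = ∑ s : ∀ n, Fin (S n), ψ s (fun n => lam n (s n))})
      ≤ ∑ s : ∀ n, Fin (S n), ∫ x, ψ s x ∂(P s)) ∧
    (∑ s : ∀ n, Fin (S n), ∫ x, ψ s x ∂(P s)
      ≤ sSup {x : ℝ | ∃ lam : ∀ n, Fin (S n) → Λ n,
          x = ∑ s : ∀ n, Fin (S n), ψ s (fun n => lam n (s n))}
        + ((μ.totalVariation Set.univ).toReal - 1) / 2 *
          (sSup {x : ℝ | ∃ lam : ∀ n, Fin (S n) → Λ n,
              x = ∑ s : ∀ n, Fin (S n), ψ s (fun n => lam n (s n))}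
            - sInf {x : ℝ | ∃ lam : ∀ n, Fin (S n) → Λ n,
              x = ∑ s : ∀ n, Fin (S n), ψ s (fun n => lam n (s n))})) := by
  choose C hC using hbdd
  set F : (∀ n, Fin (S n) → Λ n) → ℝ := fun lam => ∑ s, ψ s (fun n => lam n (s n))
  have hproj (s : ∀ n, Fin (S n)) : Measurable fun (ω : ∀ n, Fin (S n) → Λ n) n => ω n (s n) := by
    fun_prop
  have hF : Measurable F := Finset.measurable_sum _ fun s _ => (hmeas s).comp (hproj s)
  have hrange : {x : ℝ | ∃ lam, x = F lam} = Set.range F := by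
    ext; simp only [Set.mem_ofPred_eq, Set.mem_range, eq_comm]
  have hbounded : Bornology.IsBounded (Set.range F) :=
    Metric.isBounded_Icc (-∑ s, C s) (∑ s, C s) |>.subset <| Set.range_subset_iff.2 fun ω =>
      abs_le.1 <| (Finset.abs_sum_le_sum_abs _ _).trans (Finset.sum_le_sum fun s _ => hC s _)
  have hF_ge (ω) : sInf (Set.range F) ≤ F ω := csInf_le hbounded.bddBelow (Set.mem_range_self ω)
  have hF_le (ω) : F ω ≤ sSup (Set.range F) := le_csSup hbounded.bddAbove (Set.mem_range_self ω)
  rw [μ.sum_integral_eq_integral_posPart_sub_integral_negPart hproj hmarg hmeas hC, hrange]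
  exact ⟨μ.le_integral_posPart_sub_integral_negPart hnorm hF hF_ge hF_le,
    μ.integral_posPart_sub_integral_negPart_le hnorm hF hF_ge hF_le⟩

/-- **Analogs of Bell-type inequalities (Eq. (50)).** Let an `S₁ × ⋯ × S_N`-setting correlation
scenario admit a normalized finite signed measure `μ` on `Λ₁^{S₁} × ⋯ × Λ_N^{S_N}` returning
all of its joint distributions as marginals, and let `ψ` be a family of bounded measurable
real-valued functions on `Λ₁ × ⋯ × Λ_N`.  Then, with `V = ‖μ‖_var` the total variation norm
of `μ`, `B_sup`/`B_inf` the LHV constants of the family `ψ`, the sum of the averages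
`∑_{s} ∫ ψ_s dP_s` lies between `B_inf − ((V−1)/2)(B_sup−B_inf)` and
`B_sup + ((V−1)/2)(B_sup−B_inf)`. -/
theorem bell_analog_bounds
    {N : ℕ} (hN : 2 ≤ N) {S : Fin N → ℕ} (hS : ∀ n, 1 ≤ S n)
    {Λ : Fin N → Type} [∀ n, MeasurableSpace (Λ n)]
    (P : (∀ n, Fin (S n)) → Measure (∀ n, Λ n)) [∀ s, IsProbabilityMeasure (P s)]
    (μ : SignedMeasure (∀ n, Fin (S n) → Λ n))
    (hnorm : μ Set.univ = 1)
    (hmarg : ∀ s : ∀ n, Fin (S n),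
      μ.map (fun ω n => ω n (s n)) = (P s).toSignedMeasure)
    (ψ : (∀ n, Fin (S n)) → (∀ n, Λ n) → ℝ)
    (hmeas : ∀ s, Measurable (ψ s))
    (hbdd : ∀ s, ∃ C, ∀ x, |ψ s x| ≤ C) :
    (sInf {x : ℝ | ∃ lam : ∀ n, Fin (S n) → Λ n,
          x = ∑ s : ∀ n, Fin (S n), ψ s (fun n => lam n (s n))}
        - ((μ.totalVariation Set.univ).toReal - 1) / 2 *
          (sSup {x : ℝ | ∃ lam : ∀ n, Fin (S n) → Λ n,
              x = ∑ s : ∀ n, Fin (S n), ψ s (fun n => lam n (s n))}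
            - sInf {x : ℝ | ∃ lam : ∀ n, Fin (S n) → Λ n,
              x = ∑ s : ∀ n, Fin (S n), ψ s (fun n => lam n (s n))})
      ≤ ∑ s : ∀ n, Fin (S n), ∫ x, ψ s x ∂(P s)) ∧
    (∑ s : ∀ n, Fin (S n), ∫ x, ψ s x ∂(P s)
      ≤ sSup {x : ℝ | ∃ lam : ∀ n, Fin (S n) → Λ n,
          x = ∑ s : ∀ n, Fin (S n), ψ s (fun n => lam n (s n))}
        + ((μ.totalVariation Set.univ).toReal - 1) / 2 *
          (sSup {x : ℝ | ∃ lam : ∀ n, Fin (S n) → Λ n,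
              x = ∑ s : ∀ n, Fin (S n), ψ s (fun n => lam n (s n))}
            - sInf {x : ℝ | ∃ lam : ∀ n, Fin (S n) → Λ n,
              x = ∑ s : ∀ n, Fin (S n), ψ s (fun n => lam n (s n))})) :=
  bell_analog_bounds_general P μ hnorm hmarg ψ hmeas hbdd
end
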